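/- Let Ω ⊆ ℝ² be a nonempty open set and let u : ℝ² → ℝ be locally integrable on Ω with weak gradient g = (g₁,g₂) on Ω. Then the set {x = (x₁,x₂) ∈ Ω : x₁ g₁(x) − u(x) = 0 and x₁ g₂(x) = 1} is not of full Lebesgue measure in Ω; its complement in Ω has positive two-dimensional Lebesgue measure. (This is the graph case f(x₁,x₂) = (x₁, u(x₁,x₂), x₂) of the lemma stating that the Heisenberg contact system must fail on a set of positive measure for every Sobolev graph parametrization.) -/

import Mathlib

open MeasureTheory
open scoped ENNReal

/-- `u ∈ W^{1,1}_loc(Ω)` with weak gradient `(g₁, g₂)`: `u`, `g₁`, `g₂` are locally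
integrable on the open set `Ω ⊆ ℝ²` and the integration-by-parts identities
`∫_Ω u ∂ᵢφ = −∫_Ω gᵢ φ` hold for every smooth `φ` with compact support in `Ω`. -/
def HasWeakGradientOn (u g₁ g₂ : ℝ × ℝ → ℝ) (Ω : Set (ℝ × ℝ)) : Prop :=
  LocallyIntegrableOn u Ω volume ∧
  LocallyIntegrableOn g₁ Ω volume ∧
  LocallyIntegrableOn g₂ Ω volume ∧
  (∀ φ : ℝ × ℝ → ℝ, ContDiff ℝ (⊤ : ℕ∞) φ → HasCompactSupport φ → tsupport φ ⊆ Ω →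
    ∫ x in Ω, u x * fderiv ℝ φ x (1, 0) = -∫ x in Ω, g₁ x * φ x) ∧
  (∀ φ : ℝ × ℝ → ℝ, ContDiff ℝ (⊤ : ℕ∞) φ → HasCompactSupport φ → tsupport φ ⊆ Ω →
    ∫ x in Ω, u x * fderiv ℝ φ x (0, 1) = -∫ x in Ω, g₂ x * φ x)

/-!
If the contact equations held a.e. on `Ω`, then in the sense of distributions on `Ω`
`u = x₁ g₁` and `x₁ g₂ = 1`, and the symmetry of mixed weak derivatives would give
`g₂ = ∂₂ u = ∂₂ (x₁ g₁) = x₁ ∂₁ g₂ = ∂₁ (x₁ g₂) - g₂ = -g₂`.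
So `g₂ = 0` a.e. on `Ω`, which contradicts `x₁ g₂ = 1` on the set `Ω` of positive measure.
To stay with locally integrable functions, each identity is tested against a smooth compactly
supported `ρ` by feeding `x₁ ∂₁ρ` and `x₁ ∂₂ρ` into the weak derivative identities.
-/

section TestFunction

variable {E F : Type*} [NormedAddCommGroup E] [NormedSpace ℝ E]
  [NormedAddCommGroup F] [NormedSpace ℝ F]

def IsTestFunctionOn (φ : E → ℝ) (Ω : Set E) : Prop :=
  ContDiff ℝ (⊤ : ℕ∞) φ ∧ HasCompactSupport φ ∧ tsupport φ ⊆ Ω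

namespace IsTestFunctionOn

variable {φ ψ : E → ℝ} {Ω : Set E}

lemma fderiv_apply (hφ : IsTestFunctionOn φ Ω) (v : E) :
    IsTestFunctionOn (fun x => fderiv ℝ φ x v) Ω :=
  ⟨(contDiff_infty_iff_fderiv.mp hφ.1).2.clm_apply contDiff_const, hφ.2.1.fderiv_apply ℝ v,
    (tsupport_fderiv_apply_subset ℝ v).trans hφ.2.2⟩

lemma mul_left (hφ : IsTestFunctionOn φ Ω) (hψ : ContDiff ℝ (⊤ : ℕ∞) ψ) :
    IsTestFunctionOn (fun x => ψ x * φ x) Ω :=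
  ⟨hψ.mul hφ.1, hφ.2.1.mul_left, tsupport_mul_subset_right.trans hφ.2.2⟩

end IsTestFunctionOn

lemma ContDiff.fderiv_fderiv_apply_comm {ρ : E → F} (hρ : ContDiff ℝ 2 ρ) (x v w : E) :
    fderiv ℝ (fun y => fderiv ℝ ρ y v) x w = fderiv ℝ (fun y => fderiv ℝ ρ y w) x v := by
  have hρ' : Differentiable ℝ (fderiv ℝ ρ) := (hρ.fderiv_right le_rfl).differentiable one_ne_zero
  rw [fderiv_clm_apply (hρ' x) (differentiableAt_const v),
    fderiv_clm_apply (hρ' x) (differentiableAt_const w)]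
  simpa using hρ.contDiffAt.isSymmSndFDerivAt (by simp [minSmoothness_of_isRCLikeNormedField]) w v

end TestFunction

section Integral

lemma setIntegral_eq_integral_of_tsupport_subset {X M : Type*} [TopologicalSpace X]
    [MeasurableSpace X] [NormedAddCommGroup M] [NormedSpace ℝ M] {μ : Measure X} {s : Set X}
    {f : X → M} (hf : tsupport f ⊆ s) :
    ∫ x in s, f x ∂μ = ∫ x, f x ∂μ :=
  setIntegral_eq_integral_of_forall_compl_eq_zero fun _ hx =>
    image_eq_zero_of_notMem_tsupport fun h => hx (hf h)

lemma MeasureTheory.LocallyIntegrableOn.integrable_mul_of_tsupport_subset {X : Type*}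
    [TopologicalSpace X] [T2Space X] [MeasurableSpace X] [OpensMeasurableSpace X]
    {μ : Measure X} {Ω : Set X} {u φ : X → ℝ} (hu : LocallyIntegrableOn u Ω μ) (hφ : Continuous φ)
    (hφc : HasCompactSupport φ) (hφΩ : tsupport φ ⊆ Ω) :
    Integrable (fun x => u x * φ x) μ := by
  have hK : MeasurableSet (tsupport φ) := hφc.isCompact.measurableSet
  have hloc : LocallyIntegrable ((tsupport φ).indicator u) μ :=
    ((integrable_indicator_iff hK).2 (hu.integrableOn_compact_subset hφΩ hφc)).locallyIntegrable
  refine (hloc.integrable_smul_left_of_hasCompactSupport hφ hφc).congr (ae_of_all _ fun x => ?_)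
  by_cases hx : x ∈ tsupport φ
  · simp [Set.indicator_of_mem hx, mul_comm]
  · simp [image_eq_zero_of_notMem_tsupport hx]

variable {E : Type*} [NormedAddCommGroup E] [NormedSpace ℝ E] [MeasurableSpace E]

lemma integral_fderiv_apply_eq_zero [BorelSpace E] [FiniteDimensional ℝ E] (μ : Measure E)
    [μ.IsAddHaarMeasure] {ρ : E → ℝ} (hρ : ContDiff ℝ 1 ρ) (hc : HasCompactSupport ρ) (v : E) :
    ∫ x, fderiv ℝ ρ x v ∂μ = 0 := by
  have hρ' : Continuous fun x => fderiv ℝ ρ x v :=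
    (hρ.continuous_fderiv one_ne_zero).clm_apply continuous_const
  have h := integral_mul_fderiv_eq_neg_fderiv_mul_of_integrable (μ := μ) (v := v)
    (f := fun _ => (1 : ℝ)) (g := ρ) (by simp)
    (by simpa using hρ'.integrable_of_hasCompactSupport (hc.fderiv_apply ℝ v))
    (by simpa using hρ.continuous.integrable_of_hasCompactSupport hc)
    (fun _ _ => differentiableAt_const _) (fun x _ => hρ.differentiable one_ne_zero x)
  simpa using h

def HasWeakDerivOn (u g : E → ℝ) (v : E) (Ω : Set E) (μ : Measure E) : Prop :=
  ∀ φ, IsTestFunctionOn φ Ω → ∫ x in Ω, u x * fderiv ℝ φ x v ∂μ = -∫ x in Ω, g x * φ x ∂μ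

lemma HasWeakDerivOn.setIntegral_mul_mul_fderiv [OpensMeasurableSpace E]
    {u g φ ψ : E → ℝ} {v : E} {Ω : Set E} {μ : Measure E} (h : HasWeakDerivOn u g v Ω μ)
    (hu : LocallyIntegrableOn u Ω μ) (hφ : IsTestFunctionOn φ Ω)
    (hψ : ContDiff ℝ (⊤ : ℕ∞) ψ) :
    ∫ x in Ω, u x * (ψ x * fderiv ℝ φ x v) ∂μ
      = -∫ x in Ω, g x * (ψ x * φ x) ∂μ - ∫ x in Ω, u x * (fderiv ℝ ψ x v * φ x) ∂μ := by
  have hψ' : ContDiff ℝ (⊤ : ℕ∞) fun x => fderiv ℝ ψ x v :=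
    (contDiff_infty_iff_fderiv.mp hψ).2.clm_apply contDiff_const
  have h₁ := (hφ.fderiv_apply v).mul_left hψ
  have h₂ := hφ.mul_left hψ'
  have hleibniz : ∀ x, fderiv ℝ (fun y => ψ y * φ y) x v
      = ψ x * fderiv ℝ φ x v + fderiv ℝ ψ x v * φ x := fun x => by
    rw [fderiv_fun_mul (hψ.differentiable (by simp) x) (hφ.1.differentiable (by simp) x)]
    simp [mul_comm]
  have hsum := h _ (hφ.mul_left hψ)
  simp only [hleibniz, mul_add] at hsum
  rw [integral_add (hu.integrable_mul_of_tsupport_subset h₁.1.continuous h₁.2.1 h₁.2.2).integrableOn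
    (hu.integrable_mul_of_tsupport_subset h₂.1.continuous h₂.2.1 h₂.2.2).integrableOn] at hsum
  linarith

end Integral

lemma HasWeakGradientOn.hasWeakDerivOn_fst {u g₁ g₂ : ℝ × ℝ → ℝ} {Ω : Set (ℝ × ℝ)}
    (h : HasWeakGradientOn u g₁ g₂ Ω) : HasWeakDerivOn u g₁ (1, 0) Ω volume :=
  fun φ hφ => h.2.2.2.1 φ hφ.1 hφ.2.1 hφ.2.2

lemma HasWeakGradientOn.hasWeakDerivOn_snd {u g₁ g₂ : ℝ × ℝ → ℝ} {Ω : Set (ℝ × ℝ)}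
    (h : HasWeakGradientOn u g₁ g₂ Ω) : HasWeakDerivOn u g₂ (0, 1) Ω volume :=
  fun φ hφ => h.2.2.2.2 φ hφ.1 hφ.2.1 hφ.2.2

section Contact

variable {μ : Measure (ℝ × ℝ)} [μ.IsAddHaarMeasure] {Ω : Set (ℝ × ℝ)} {u g₁ g₂ ρ : ℝ × ℝ → ℝ}

lemma setIntegral_mul_eq_zero_of_contact (hΩ : MeasurableSet Ω) (hu : LocallyIntegrableOn u Ω μ)
    (h₁ : HasWeakDerivOn u g₁ (1, 0) Ω μ) (h₂ : HasWeakDerivOn u g₂ (0, 1) Ω μ)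
    (hc₁ : ∀ᵐ x ∂μ, x ∈ Ω → x.1 * g₁ x = u x) (hc₂ : ∀ᵐ x ∂μ, x ∈ Ω → x.1 * g₂ x = 1)
    (hρ : IsTestFunctionOn ρ Ω) :
    ∫ x in Ω, g₂ x * ρ x ∂μ = 0 := by
  have hfst : ContDiff ℝ (⊤ : ℕ∞) (Prod.fst : ℝ × ℝ → ℝ) := contDiff_fst
  have hmixed₂₁ :
      ∫ x in Ω, u x * (x.1 * fderiv ℝ (fun y => fderiv ℝ ρ y (1, 0)) x (0, 1)) ∂μ = 0 := by
    have hg₂ : ∫ x in Ω, g₂ x * (x.1 * fderiv ℝ ρ x (1, 0)) ∂μ = ∫ x in Ω, fderiv ℝ ρ x (1, 0) ∂μ :=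
      setIntegral_congr_ae hΩ <| by
        filter_upwards [hc₂] with x hx hxΩ
        rw [← mul_assoc, mul_comm (g₂ x), hx hxΩ, one_mul]
    rw [h₂.setIntegral_mul_mul_fderiv hu (hρ.fderiv_apply (1, 0)) hfst, hg₂,
      setIntegral_eq_integral_of_tsupport_subset (hρ.fderiv_apply (1, 0)).2.2,
      integral_fderiv_apply_eq_zero μ (contDiff_infty.1 hρ.1 _) hρ.2.1]
    simp [fderiv_fst]
  have hmixed₁₂ : ∫ x in Ω, u x * (x.1 * fderiv ℝ (fun y => fderiv ℝ ρ y (0, 1)) x (1, 0)) ∂μ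
      = -2 * ∫ x in Ω, u x * fderiv ℝ ρ x (0, 1) ∂μ := by
    have hg₁ : ∫ x in Ω, g₁ x * (x.1 * fderiv ℝ ρ x (0, 1)) ∂μ
        = ∫ x in Ω, u x * fderiv ℝ ρ x (0, 1) ∂μ :=
      setIntegral_congr_ae hΩ <| by
        filter_upwards [hc₁] with x hx hxΩ
        rw [← mul_assoc, mul_comm (g₁ x), hx hxΩ]
    rw [h₁.setIntegral_mul_mul_fderiv hu (hρ.fderiv_apply (0, 1)) hfst, hg₁]
    simp only [fderiv_fst, ContinuousLinearMap.coe_fst', one_mul, neg_mul]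
    ring
  have hswap : ∫ x in Ω, u x * (x.1 * fderiv ℝ (fun y => fderiv ℝ ρ y (0, 1)) x (1, 0)) ∂μ
      = ∫ x in Ω, u x * (x.1 * fderiv ℝ (fun y => fderiv ℝ ρ y (1, 0)) x (0, 1)) ∂μ :=
    integral_congr_ae <| ae_of_all _ fun x => by
      dsimp only
      rw [(contDiff_infty.1 hρ.1 _).fderiv_fderiv_apply_comm]
  rw [hswap, hmixed₂₁] at hmixed₁₂
  linarith [h₂ ρ hρ]

end Contact

/-- For a Sobolev graph parametrization `f(x₁,x₂) = (x₁, u(x₁,x₂), x₂)` of a surface in the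
Heisenberg group `ℍ¹`, the contact system (here `x₁g₁ − u = 0` and `x₁g₂ = 1`) must fail
on a set of positive Lebesgue measure. -/
theorem contact_fails_on_positive_measure_graph2
    (Ω : Set (ℝ × ℝ)) (hΩ : IsOpen Ω) (hne : Ω.Nonempty)
    (u g₁ g₂ : ℝ × ℝ → ℝ) (hu : HasWeakGradientOn u g₁ g₂ Ω) :
    0 < volume {x ∈ Ω | ¬ (x.1 * g₁ x - u x = 0 ∧ x.1 * g₂ x = 1)} := by
  refine pos_iff_ne_zero.2 fun hzero => ?_
  have hcontact : ∀ᵐ x, x ∈ Ω → x.1 * g₁ x - u x = 0 ∧ x.1 * g₂ x = 1 :=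
    ae_iff.2 (measure_mono_null (fun _ => Classical.not_imp.1) hzero)
  have hg₂ : ∀ᵐ x, x ∈ Ω → g₂ x = 0 := by
    refine hΩ.ae_eq_zero_of_integral_contDiff_smul_eq_zero hu.2.2.1 fun ρ hρ hρc hρΩ => ?_
    rw [← setIntegral_eq_integral_of_tsupport_subset (tsupport_smul_subset_left _ _ |>.trans hρΩ)]
    simp only [smul_eq_mul, mul_comm (ρ _)]
    refine setIntegral_mul_eq_zero_of_contact hΩ.measurableSet hu.1 hu.hasWeakDerivOn_fst
      hu.hasWeakDerivOn_snd ?_ ?_ ⟨hρ, hρc, hρΩ⟩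
    · filter_upwards [hcontact] with x hx hxΩ using sub_eq_zero.1 (hx hxΩ).1
    · filter_upwards [hcontact] with x hx hxΩ using (hx hxΩ).2
  refine (hΩ.measure_pos volume hne).ne' (measure_eq_zero_iff_ae_notMem.2 ?_)
  filter_upwards [hcontact, hg₂] with x hx hx₀ hxΩ
  simpa [hx₀ hxΩ] using (hx hxΩ).2
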